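/- arXiv:2101.09803 — 3 statements merged into one kernel-verified Lean document; each statement's English description precedes it below -/
import Mathlib

section
/- Let S be a commutative Noetherian ring, I₁ and I₂ transversal ideals of S (i.e., I₁ ∩ I₂ = I₁I₂), and z ∈ S an element that is a nonzerodivisor modulo I = I₁ + I₂. Then the images of I₁ and I₂ in S' = S/(z) are still transversal, and moreover (I₁, z) ∩ (I₂, z) = (I₁ ∩ I₂, z). -/
/-!
If `x = a₁ + s z = a₂ + t z` with `aᵢ ∈ Iᵢ`, then `z (s - t) = a₂ - a₁ ∈ I₁ + I₂`, so regularity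
of `z` modulo `I₁ + I₂` splits `s - t = u₁ + u₂` with `uᵢ ∈ Iᵢ`. Then `a₁ + u₁ z = a₂ - u₂ z` lies in
`I₁ ∩ I₂` and `x = (a₁ + u₁ z) + (t + u₂) z`, which gives `(I₁, z) ∩ (I₂, z) = (I₁ ∩ I₂, z)`.
Pushing this to `S/(z)` turns the intersection of the images into the image of `I₁ ∩ I₂ = I₁ I₂`,
which is the product of the images.
-/

namespace Ideal

variable {R : Type*} [CommRing R]

theorem sup_span_singleton_inf_sup_span_singleton {I₁ I₂ : Ideal R} {z : R}
    (hz : ∀ f : R, z * f ∈ I₁ ⊔ I₂ → f ∈ I₁ ⊔ I₂) :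
    (I₁ ⊔ span {z}) ⊓ (I₂ ⊔ span {z}) = I₁ ⊓ I₂ ⊔ span {z} := by
  refine le_antisymm ?_ (le_inf (sup_le_sup_right inf_le_left _) (sup_le_sup_right inf_le_right _))
  intro x hx
  obtain ⟨hx₁, hx₂⟩ := Submodule.mem_inf.mp hx
  rw [sup_comm, mem_span_singleton_sup] at hx₁ hx₂ ⊢
  obtain ⟨s, a₁, ha₁, rfl⟩ := hx₁
  obtain ⟨t, a₂, ha₂, hx⟩ := hx₂
  have hdiff : z * (s - t) ∈ I₁ ⊔ I₂ := by
    rw [show z * (s - t) = a₂ - a₁ by linear_combination -hx]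
    exact sub_mem (Submodule.mem_sup_right ha₂) (Submodule.mem_sup_left ha₁)
  obtain ⟨u₁, hu₁, u₂, hu₂, hu⟩ := Submodule.mem_sup.mp (hz _ hdiff)
  have hcommon : a₁ + u₁ * z = a₂ - u₂ * z := by linear_combination z * hu - hx
  refine ⟨t + u₂, a₁ + u₁ * z, ⟨add_mem ha₁ (mul_mem_right _ _ hu₁), ?_⟩, ?_⟩
  · rw [hcommon]
    exact sub_mem ha₂ (mul_mem_right _ _ hu₂)
  · linear_combination z * hu

theorem map_inf_map_of_surjective {S : Type*} [CommRing S] {f : R →+* S}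
    (hf : Function.Surjective f) (I₁ I₂ : Ideal R) :
    map f I₁ ⊓ map f I₂ = map f ((I₁ ⊔ RingHom.ker f) ⊓ (I₂ ⊔ RingHom.ker f)) := by
  rw [← map_inf_comap_of_surjective f hf, comap_map_of_surjective f hf,
    comap_map_of_surjective f hf, ← RingHom.ker_eq_comap_bot]

theorem map_mk_inf_map_mk (J I₁ I₂ : Ideal R) :
    map (Quotient.mk J) I₁ ⊓ map (Quotient.mk J) I₂ = map (Quotient.mk J) ((I₁ ⊔ J) ⊓ (I₂ ⊔ J)) := by
  rw [map_inf_map_of_surjective Quotient.mk_surjective, mk_ker]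

end Ideal

theorem transversal_mod_regular_element_general
    {S : Type} [CommRing S] (I₁ I₂ : Ideal S) (z : S)
    (htrans : I₁ ⊓ I₂ = I₁ * I₂)
    (hreg : ∀ f : S, z * f ∈ I₁ + I₂ → f ∈ I₁ + I₂) :
    (Ideal.map (Ideal.Quotient.mk (Ideal.span {z})) I₁ ⊓
        Ideal.map (Ideal.Quotient.mk (Ideal.span {z})) I₂ =
      Ideal.map (Ideal.Quotient.mk (Ideal.span {z})) I₁ *
        Ideal.map (Ideal.Quotient.mk (Ideal.span {z})) I₂) ∧
    (I₁ + Ideal.span {z}) ⊓ (I₂ + Ideal.span {z}) = (I₁ ⊓ I₂) + Ideal.span {z} := by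
  have hinf := Ideal.sup_span_singleton_inf_sup_span_singleton hreg
  refine ⟨?_, hinf⟩
  rw [Ideal.map_mk_inf_map_mk, hinf, Ideal.map_sup, Ideal.map_quotient_self, sup_bot_eq, htrans,
    Ideal.map_mul]

/-- If `I₁, I₂` are transversal ideals of a commutative Noetherian ring `S` and `z` is a
nonzerodivisor modulo `I = I₁ + I₂`, then the images of `I₁` and `I₂` in `S/(z)` are still
transversal, and `(I₁, z) ∩ (I₂, z) = (I₁ ∩ I₂, z)`. -/
theorem transversal_mod_regular_element
    {S : Type} [CommRing S] [IsNoetherianRing S] (I₁ I₂ : Ideal S) (z : S)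
    (htrans : I₁ ⊓ I₂ = I₁ * I₂)
    (hreg : ∀ f : S, z * f ∈ I₁ + I₂ → f ∈ I₁ + I₂) :
    (Ideal.map (Ideal.Quotient.mk (Ideal.span {z})) I₁ ⊓
        Ideal.map (Ideal.Quotient.mk (Ideal.span {z})) I₂ =
      Ideal.map (Ideal.Quotient.mk (Ideal.span {z})) I₁ *
        Ideal.map (Ideal.Quotient.mk (Ideal.span {z})) I₂) ∧
    (I₁ + Ideal.span {z}) ⊓ (I₂ + Ideal.span {z}) = (I₁ ⊓ I₂) + Ideal.span {z} :=
  transversal_mod_regular_element_general I₁ I₂ z htrans hreg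
end

section
/- Let S = k[x, y, z, a₃, a₄, b₃, b₄] be a polynomial ring over a field with variables as listed, and let I = (xz, yz, a₃x+b₃y, a₄x+b₄y). Then the listed four generators form a Gröbner basis of I with respect to any degree lexicographic order satisfying a₃ > b₃ > b₄ > a₄ > x > y > z. In particular, the initial ideal of I is generated by quadratic monomials. -/
open MvPolynomial

/-- The degree-lexicographic key of a monomial exponent vector in seven variables,
where the variable with index `0` is largest, then `1`, etc.  Monomials are first
compared by total degree, then lexicographically. -/
noncomputable def degLexKey (m : Fin 7 →₀ ℕ) : ℕ ×ₗ Lex (Fin 7 → ℕ) :=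
  toLex (m.sum fun _ e => e, toLex fun i => m i)

/-- `m` is the leading monomial of `f` for the degree-lexicographic order. -/
def IsLeadMonomial {k : Type} [Field k] (f : MvPolynomial (Fin 7) k) (m : Fin 7 →₀ ℕ) :
    Prop :=
  m ∈ f.support ∧ ∀ m' ∈ f.support, degLexKey m' ≤ degLexKey m

/-- The initial ideal of `I` with respect to the degree-lexicographic order: the ideal
generated by the leading monomials of the nonzero elements of `I`. -/
noncomputable def initialIdeal {k : Type} [Field k] (I : Ideal (MvPolynomial (Fin 7) k)) :
    Ideal (MvPolynomial (Fin 7) k) :=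
  Ideal.span { g | ∃ f ∈ I, ∃ m, IsLeadMonomial f m ∧ g = MvPolynomial.monomial m (1 : k) }

/-!
The leading monomials of `xz, yz, a₃x + b₃y, a₄x + b₄y` are `xz, yz, a₃x, b₄y`, so it suffices
to show that no standard monomial (one divisible by none of these) leads an element of `I`.
For this we write down the normal form modulo `I` in closed form: a monomial divisible by `xz`
or `yz` goes to `0`, any other one is rewritten by `a₃x ↦ -b₃y` and `b₄y ↦ -a₄x` as long as
possible. Extended linearly, this map kills `I` (it respects the four relations), fixes the
standard monomials and never raises the degLex order of a monomial. So if `f ∈ I` had a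
standard leading monomial `m`, the coefficient of `m` in the normal form of `f` would be the
nonzero coefficient of `m` in `f`, although the normal form of `f` is `0`.
-/

lemma sum_single_add_single {σ : Type*} (i j : σ) :
    (Finsupp.single i 1 + Finsupp.single j 1).sum (fun _ e => e) = 2 := by
  rw [Finsupp.sum_add_index' (fun _ => rfl) (fun _ _ _ => rfl), Finsupp.sum_single_index rfl,
    Finsupp.sum_single_index rfl]

lemma single_add_single_le {σ : Type*} {i j : σ} (hij : i ≠ j) {m : σ →₀ ℕ} (hi : m i ≠ 0)
    (hj : m j ≠ 0) : Finsupp.single i 1 + Finsupp.single j 1 ≤ m := fun t => by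
  classical
  simp only [Finsupp.add_apply, Finsupp.single_apply]
  split_ifs <;> subst_vars <;> simp_all <;> omega

section LeadingMonomial

variable {k : Type} [Field k]

lemma degLexKey_injective : Function.Injective degLexKey := fun _ _ h =>
  Finsupp.ext fun i => congrFun (congrArg (fun p => ofLex (ofLex p).2) h) i

lemma degLexKey_le_of_toLex_le {m n : Fin 7 →₀ ℕ}
    (hdeg : n.sum (fun _ e => e) = m.sum (fun _ e => e)) (hlex : toLex ⇑n ≤ toLex ⇑m) :
    degLexKey n ≤ degLexKey m :=
  Prod.Lex.toLex_le_toLex.2 (Or.inr ⟨hdeg, hlex⟩)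

lemma IsLeadMonomial.unique {f : MvPolynomial (Fin 7) k} {m m' : Fin 7 →₀ ℕ}
    (h : IsLeadMonomial f m) (h' : IsLeadMonomial f m') : m = m' :=
  degLexKey_injective (le_antisymm (h'.2 m h.1) (h.2 m' h'.1))

lemma isLeadMonomial_monomial (m : Fin 7 →₀ ℕ) : IsLeadMonomial (monomial m (1 : k)) m := by
  refine ⟨by simp, fun n hn => ?_⟩
  rw [Finset.mem_singleton.1 (support_monomial_subset hn)]

lemma isLeadMonomial_monomial_add_monomial {m n : Fin 7 →₀ ℕ} (hne : n ≠ m)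
    (hle : degLexKey n ≤ degLexKey m) : IsLeadMonomial (monomial m (1 : k) + monomial n 1) m := by
  refine ⟨by simp [coeff_monomial, hne], fun n' hn' => ?_⟩
  rcases Finset.mem_union.1 (support_add hn') with h | h
  · rw [Finset.mem_singleton.1 (support_monomial_subset h)]
  · rwa [Finset.mem_singleton.1 (support_monomial_subset h)]

lemma coeff_map_monomial_eq_zero_of_isLeadMonomial
    (Φ : MvPolynomial (Fin 7) k →ₗ[k] MvPolynomial (Fin 7) k)
    (hΦ : ∀ m, ∀ n ∈ (Φ (monomial m 1)).support, degLexKey n ≤ degLexKey m)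
    {f : MvPolynomial (Fin 7) k} {m : Fin 7 →₀ ℕ} (hf : Φ f = 0) (hm : IsLeadMonomial f m) :
    coeff m (Φ (monomial m 1)) = 0 := by
  have hΦ_monomial : ∀ n c, Φ (monomial n c) = c • Φ (monomial n 1) := fun n c => by
    rw [← map_smul, smul_monomial, smul_eq_mul, mul_one]
  have hcoeff : coeff m (Φ f) = coeff m f * coeff m (Φ (monomial m 1)) := by
    conv_lhs => rw [f.as_sum, map_sum, Finset.sum_congr rfl fun n _ => hΦ_monomial n _]
    simp only [coeff_sum, coeff_smul, smul_eq_mul]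
    refine Finset.sum_eq_single_of_mem m hm.1 fun n hn hnm => ?_
    by_contra hne
    have hmn := hΦ n m (mem_support_iff.2 (right_ne_zero_of_mul hne))
    exact hnm (degLexKey_injective (le_antisymm (hm.2 n hn) hmn))
  rw [hf, coeff_zero, eq_comm] at hcoeff
  exact (mul_eq_zero.1 hcoeff).resolve_left (mem_support_iff.1 hm.1)

lemma map_eq_zero_of_mem_ideal_span {σ R M : Type*} [CommSemiring R] [AddCommMonoid M]
    [Module R M] (Φ : MvPolynomial σ R →ₗ[R] M) {G : Set (MvPolynomial σ R)}
    (hG : ∀ g ∈ G, ∀ u, Φ (monomial u 1 * g) = 0) {f : MvPolynomial σ R}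
    (hf : f ∈ Ideal.span G) : Φ f = 0 := by
  suffices ∀ c, Φ (c * f) = 0 by simpa using this 1
  induction hf using Submodule.span_induction with
  | mem g hg =>
    intro c
    induction c using MvPolynomial.induction_on' with
    | monomial u a =>
      rw [show monomial u a * g = a • (monomial u 1 * g) by
        rw [← smul_mul_assoc, smul_monomial, smul_eq_mul, mul_one], map_smul, hG g hg u, smul_zero]
    | add p q hp hq => rw [add_mul, map_add, hp, hq, add_zero]
  | zero => simp
  | add x y _ _ hx hy => intro c; rw [mul_add, map_add, hx, hy, add_zero]
  | smul a x _ hx => intro c; rw [smul_eq_mul, ← mul_assoc, hx]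

lemma initialIdeal_span_eq_span_monomial {G : Set (MvPolynomial (Fin 7) k)}
    {E : Set (Fin 7 →₀ ℕ)} (hE : ∀ e ∈ E, ∃ g ∈ G, IsLeadMonomial g e)
    (hle : ∀ f ∈ Ideal.span G, ∀ m, IsLeadMonomial f m → ∃ e ∈ E, e ≤ m) :
    initialIdeal (Ideal.span G) = Ideal.span ((fun m => monomial m (1 : k)) '' E) := by
  unfold initialIdeal
  apply le_antisymm <;> rw [Ideal.span_le]
  · rintro _ ⟨f, hf, m, hm, rfl⟩
    obtain ⟨e, he, hem⟩ := hle f hf m hm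
    exact Ideal.mem_of_dvd _ (monomial_dvd_monomial.2 ⟨Or.inr hem, dvd_rfl⟩)
      (Ideal.subset_span ⟨e, he, rfl⟩)
  · rintro _ ⟨e, he, rfl⟩
    obtain ⟨g, hg, hge⟩ := hE e he
    exact Ideal.subset_span ⟨g, Ideal.subset_span hg, e, hge, rfl⟩

lemma setOf_isLeadMonomial_eq_image {G : Set (MvPolynomial (Fin 7) k)} {E : Set (Fin 7 →₀ ℕ)}
    (hG : ∀ g ∈ G, ∃ e ∈ E, IsLeadMonomial g e) (hE : ∀ e ∈ E, ∃ g ∈ G, IsLeadMonomial g e) :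
    {h | ∃ g ∈ G, ∃ m, IsLeadMonomial g m ∧ h = monomial m (1 : k)} =
      (fun m => monomial m 1) '' E := by
  ext h
  constructor
  · rintro ⟨g, hg, m, hm, rfl⟩
    obtain ⟨e, he, hge⟩ := hG g hg
    exact ⟨e, he, by rw [hm.unique hge]⟩
  · rintro ⟨e, he, rfl⟩
    obtain ⟨g, hg, hge⟩ := hE e he
    exact ⟨g, hg, e, hge, rfl⟩

end LeadingMonomial

section NormalForm

variable (R : Type*) [CommRing R]

-- The exponent of `X ^ m` after `α` rewrites `a₃x ↦ b₃y` and `β` rewrites `b₄y ↦ a₄x`, where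
-- `X 0, …, X 6` are `a₃, b₃, b₄, a₄, x, y, z`.
noncomputable def rewriteExp (m : Fin 7 →₀ ℕ) (α β : ℕ) : Fin 7 →₀ ℕ :=
  Finsupp.equivFunOnFinite.symm
    ![m 0 - α, m 1 + α, m 2 - β, m 3 + β, m 4 + β - α, m 5 + α - β, m 6]

-- The normal form of `X ^ m` modulo `I`: the rewrites `a₃x ↦ -b₃y` and `b₄y ↦ -a₄x` go on
-- until `a₃` or `x`, and `b₄` or `y`, runs out, which gives the two counts `min …`.
noncomputable def normalForm (m : Fin 7 →₀ ℕ) : MvPolynomial (Fin 7) R :=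
  if m 4 = 0 ∧ m 5 = 0 then monomial m 1
  else if m 6 = 0 then
    monomial (rewriteExp m (min (m 0) (m 4 + m 2)) (min (m 2) (m 5 + m 0)))
      ((-1) ^ (min (m 0) (m 4 + m 2) + min (m 2) (m 5 + m 0)))
  else 0

lemma normalForm_xz (u : Fin 7 →₀ ℕ) :
    normalForm R (u + Finsupp.single 4 1 + Finsupp.single 6 1) = 0 := by
  simp [normalForm]

lemma normalForm_yz (u : Fin 7 →₀ ℕ) :
    normalForm R (u + Finsupp.single 5 1 + Finsupp.single 6 1) = 0 := by
  simp [normalForm]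

lemma normalForm_a₃x_add_normalForm_b₃y (u : Fin 7 →₀ ℕ) :
    normalForm R (u + Finsupp.single 0 1 + Finsupp.single 4 1) +
      normalForm R (u + Finsupp.single 1 1 + Finsupp.single 5 1) = 0 := by
  simp only [normalForm, Finsupp.add_apply, Finsupp.single_apply, Fin.reduceEq, if_true,
    if_false, add_zero, Nat.add_eq_zero_iff, one_ne_zero, and_false, false_and]
  split_ifs
  · have hexp : rewriteExp (u + Finsupp.single 0 1 + Finsupp.single 4 1)
          (min (u 0 + 1) (u 4 + 1 + u 2)) (min (u 2) (u 5 + (u 0 + 1))) =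
        rewriteExp (u + Finsupp.single 1 1 + Finsupp.single 5 1)
          (min (u 0) (u 4 + u 2)) (min (u 2) (u 5 + 1 + u 0)) := by
      ext t; fin_cases t <;> simp [rewriteExp] <;> omega
    rw [hexp, ← map_add, show min (u 0 + 1) (u 4 + 1 + u 2) + min (u 2) (u 5 + (u 0 + 1)) =
      min (u 0) (u 4 + u 2) + min (u 2) (u 5 + 1 + u 0) + 1 by omega, pow_succ, mul_neg_one,
      neg_add_cancel, map_zero]
  · rw [add_zero]

lemma normalForm_a₄x_add_normalForm_b₄y (u : Fin 7 →₀ ℕ) :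
    normalForm R (u + Finsupp.single 3 1 + Finsupp.single 4 1) +
      normalForm R (u + Finsupp.single 2 1 + Finsupp.single 5 1) = 0 := by
  simp only [normalForm, Finsupp.add_apply, Finsupp.single_apply, Fin.reduceEq, if_true,
    if_false, add_zero, Nat.add_eq_zero_iff, one_ne_zero, and_false, false_and]
  split_ifs
  · have hexp : rewriteExp (u + Finsupp.single 3 1 + Finsupp.single 4 1)
          (min (u 0) (u 4 + 1 + u 2)) (min (u 2) (u 5 + u 0)) =
        rewriteExp (u + Finsupp.single 2 1 + Finsupp.single 5 1)
          (min (u 0) (u 4 + (u 2 + 1))) (min (u 2 + 1) (u 5 + 1 + u 0)) := by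
      ext t; fin_cases t <;> simp [rewriteExp] <;> omega
    rw [hexp, ← map_add, show min (u 0) (u 4 + (u 2 + 1)) + min (u 2 + 1) (u 5 + 1 + u 0) =
      min (u 0) (u 4 + 1 + u 2) + min (u 2) (u 5 + u 0) + 1 by omega, pow_succ, mul_neg_one,
      add_neg_cancel, map_zero]
  · rw [add_zero]

noncomputable def normalFormMap : MvPolynomial (Fin 7) R →ₗ[R] MvPolynomial (Fin 7) R :=
  (basisMonomials (Fin 7) R).constr R (normalForm R)

lemma normalFormMap_monomial (m : Fin 7 →₀ ℕ) :
    normalFormMap R (monomial m 1) = normalForm R m := by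
  simpa [normalFormMap] using (basisMonomials (Fin 7) R).constr_basis R (normalForm R) m

def generators : Set (MvPolynomial (Fin 7) R) :=
  {X 4 * X 6, X 5 * X 6, X 0 * X 4 + X 1 * X 5, X 3 * X 4 + X 2 * X 5}

lemma X_mul_X_eq_monomial (i j : Fin 7) :
    X i * X j = monomial (Finsupp.single i 1 + Finsupp.single j 1) (1 : R) := by
  rw [X, X, monomial_mul, mul_one]

lemma monomial_mul_X_mul_X (u : Fin 7 →₀ ℕ) (i j : Fin 7) :
    monomial u (1 : R) * (X i * X j) =
      monomial (u + Finsupp.single i 1 + Finsupp.single j 1) 1 := by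
  rw [X_mul_X_eq_monomial, monomial_mul, mul_one, add_assoc]

lemma normalFormMap_eq_zero_of_mem_span {f : MvPolynomial (Fin 7) R}
    (hf : f ∈ Ideal.span (generators R)) : normalFormMap R f = 0 := by
  refine map_eq_zero_of_mem_ideal_span _ (fun g hg u => ?_) hf
  rcases hg with rfl | rfl | rfl | rfl <;>
    simp only [mul_add, monomial_mul_X_mul_X, map_add, normalFormMap_monomial]
  · exact normalForm_xz R u
  · exact normalForm_yz R u
  · exact normalForm_a₃x_add_normalForm_b₃y R u
  · exact normalForm_a₄x_add_normalForm_b₄y R u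

lemma rewriteExp_zero_zero (m : Fin 7 →₀ ℕ) : rewriteExp m 0 0 = m := by
  ext t; fin_cases t <;> simp [rewriteExp]

lemma degLexKey_rewriteExp_le {m : Fin 7 →₀ ℕ} {α β : ℕ} (hα : α ≤ m 0) (hβ : β ≤ m 2)
    (hx : α ≤ m 4 + β) (hy : β ≤ m 5 + α) : degLexKey (rewriteExp m α β) ≤ degLexKey m := by
  apply degLexKey_le_of_toLex_le
  · rw [Finsupp.sum_fintype _ _ (fun _ => rfl), Finsupp.sum_fintype _ _ (fun _ => rfl)]
    simp only [rewriteExp, Finsupp.equivFunOnFinite_symm_apply_apply, Fin.sum_univ_seven,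
      Matrix.cons_val_zero, Matrix.cons_val_one, Matrix.cons_val]
    omega
  · rcases Nat.eq_zero_or_pos α with rfl | hα₀
    · rcases Nat.eq_zero_or_pos β with rfl | hβ₀
      · rw [rewriteExp_zero_zero]
      · exact le_of_lt ⟨2, fun j hj => by fin_cases j <;> simp_all [rewriteExp], by
          simp [rewriteExp]; omega⟩
    · exact le_of_lt ⟨0, fun j hj => absurd hj (Fin.not_lt_zero j), by simp [rewriteExp]; omega⟩

lemma degLexKey_le_of_mem_support_normalForm {m n : Fin 7 →₀ ℕ}
    (hn : n ∈ (normalForm R m).support) : degLexKey n ≤ degLexKey m := by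
  unfold normalForm at hn
  split_ifs at hn
  · rw [Finset.mem_singleton.1 (support_monomial_subset hn)]
  · rw [Finset.mem_singleton.1 (support_monomial_subset hn)]
    exact degLexKey_rewriteExp_le (min_le_left _ _) (min_le_left _ _) (by omega) (by omega)
  · simp at hn

lemma normalForm_of_standard {m : Fin 7 →₀ ℕ} (h04 : m 0 = 0 ∨ m 4 = 0)
    (h25 : m 2 = 0 ∨ m 5 = 0) (h46 : m 4 = 0 ∨ m 6 = 0) (h56 : m 5 = 0 ∨ m 6 = 0) :
    normalForm R m = monomial m 1 := by
  unfold normalForm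
  split_ifs
  · rfl
  · rw [show min (m 0) (m 4 + m 2) = 0 by omega, show min (m 2) (m 5 + m 0) = 0 by omega,
      rewriteExp_zero_zero, pow_zero]
  · omega

def leadingExps : Set (Fin 7 →₀ ℕ) :=
  {Finsupp.single 4 1 + Finsupp.single 6 1, Finsupp.single 5 1 + Finsupp.single 6 1,
    Finsupp.single 0 1 + Finsupp.single 4 1, Finsupp.single 2 1 + Finsupp.single 5 1}

variable {k : Type} [Field k]

lemma exists_mem_leadingExps_le {f : MvPolynomial (Fin 7) k} (hf : f ∈ Ideal.span (generators k))
    {m : Fin 7 →₀ ℕ} (hm : IsLeadMonomial f m) : ∃ e ∈ leadingExps, e ≤ m := by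
  by_contra! hle
  have hstd : ∀ i j, i ≠ j → Finsupp.single i 1 + Finsupp.single j 1 ∈ leadingExps →
      m i = 0 ∨ m j = 0 := fun i j hij he => by
    by_contra! h
    exact hle _ he (single_add_single_le hij h.1 h.2)
  have hcoeff := coeff_map_monomial_eq_zero_of_isLeadMonomial (normalFormMap k)
    (fun m' n hn => degLexKey_le_of_mem_support_normalForm k
      (by rwa [normalFormMap_monomial] at hn))
    (normalFormMap_eq_zero_of_mem_span k hf) hm
  rw [normalFormMap_monomial, normalForm_of_standard k
    (hstd 0 4 (by decide) (by simp [leadingExps])) (hstd 2 5 (by decide) (by simp [leadingExps]))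
    (hstd 4 6 (by decide) (by simp [leadingExps])) (hstd 5 6 (by decide) (by simp [leadingExps])),
    coeff_monomial, if_pos rfl] at hcoeff
  exact one_ne_zero hcoeff

lemma isLeadMonomial_X_mul_X (i j : Fin 7) :
    IsLeadMonomial (X i * X j : MvPolynomial (Fin 7) k)
      (Finsupp.single i 1 + Finsupp.single j 1) := by
  rw [X_mul_X_eq_monomial]
  exact isLeadMonomial_monomial _

lemma isLeadMonomial_a₃x_add_b₃y :
    IsLeadMonomial (X 0 * X 4 + X 1 * X 5 : MvPolynomial (Fin 7) k)
      (Finsupp.single 0 1 + Finsupp.single 4 1) := by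
  rw [X_mul_X_eq_monomial, X_mul_X_eq_monomial]
  refine isLeadMonomial_monomial_add_monomial (fun h => by simpa using DFunLike.congr_fun h 0)
    (degLexKey_le_of_toLex_le (by rw [sum_single_add_single, sum_single_add_single])
      (le_of_lt ⟨0, fun j hj => absurd hj (Fin.not_lt_zero j), by simp⟩))

lemma isLeadMonomial_a₄x_add_b₄y :
    IsLeadMonomial (X 3 * X 4 + X 2 * X 5 : MvPolynomial (Fin 7) k)
      (Finsupp.single 2 1 + Finsupp.single 5 1) := by
  rw [X_mul_X_eq_monomial, X_mul_X_eq_monomial, add_comm]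
  refine isLeadMonomial_monomial_add_monomial (fun h => by simpa using DFunLike.congr_fun h 2)
    (degLexKey_le_of_toLex_le (by rw [sum_single_add_single, sum_single_add_single])
      (le_of_lt ⟨2, fun j hj => by fin_cases j <;> simp_all, by simp⟩))

lemma exists_isLeadMonomial_of_mem_generators :
    ∀ g ∈ generators k, ∃ e ∈ leadingExps, IsLeadMonomial g e := by
  rintro g (rfl | rfl | rfl | rfl)
  · exact ⟨_, by simp [leadingExps], isLeadMonomial_X_mul_X 4 6⟩
  · exact ⟨_, by simp [leadingExps], isLeadMonomial_X_mul_X 5 6⟩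
  · exact ⟨_, by simp [leadingExps], isLeadMonomial_a₃x_add_b₃y⟩
  · exact ⟨_, by simp [leadingExps], isLeadMonomial_a₄x_add_b₄y⟩

lemma exists_mem_generators_isLeadMonomial :
    ∀ e ∈ leadingExps, ∃ g ∈ generators k, IsLeadMonomial g e := by
  rintro e (rfl | rfl | rfl | rfl)
  · exact ⟨_, by simp [generators], isLeadMonomial_X_mul_X 4 6⟩
  · exact ⟨_, by simp [generators], isLeadMonomial_X_mul_X 5 6⟩
  · exact ⟨_, by simp [generators], isLeadMonomial_a₃x_add_b₃y⟩
  · exact ⟨_, by simp [generators], isLeadMonomial_a₄x_add_b₄y⟩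

end NormalForm

/-- In `S = k[a₃, b₃, b₄, a₄, x, y, z]` (variables listed in decreasing order, realized as
`X 0 > X 1 > ⋯ > X 6`), the four generators `xz, yz, a₃x + b₃y, a₄x + b₄y` form a Gröbner
basis of the ideal they generate with respect to the degree-lexicographic order:
the initial ideal of `I` is generated by the leading monomials of the four generators.
In particular, the initial ideal of `I` is generated by quadratic monomials. -/
theorem groebner_basis_deglex {k : Type} [Field k]
    (a₃ b₃ b₄ a₄ x y z : MvPolynomial (Fin 7) k)
    (ha₃ : a₃ = X 0) (hb₃ : b₃ = X 1) (hb₄ : b₄ = X 2) (ha₄ : a₄ = X 3)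
    (hx : x = X 4) (hy : y = X 5) (hz : z = X 6)
    (G : Set (MvPolynomial (Fin 7) k))
    (hG : G = {x * z, y * z, a₃ * x + b₃ * y, a₄ * x + b₄ * y})
    (I : Ideal (MvPolynomial (Fin 7) k)) (hI : I = Ideal.span G) :
    initialIdeal I =
      Ideal.span { h | ∃ g ∈ G, ∃ m, IsLeadMonomial g m ∧
        h = MvPolynomial.monomial m (1 : k) } ∧
    ∃ E : Set (Fin 7 →₀ ℕ), (∀ m ∈ E, m.sum (fun _ e => e) = 2) ∧
      initialIdeal I = Ideal.span ((fun m => MvPolynomial.monomial m (1 : k)) '' E) := by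
  subst ha₃ hb₃ hb₄ ha₄ hx hy hz hI
  obtain rfl : G = generators k := hG
  have hinit := initialIdeal_span_eq_span_monomial
    (exists_mem_generators_isLeadMonomial (k := k)) fun _ hf _ hm => exists_mem_leadingExps_le hf hm
  refine ⟨?_, leadingExps, ?_, hinit⟩
  · rw [hinit, setOf_isLeadMonomial_eq_image exists_isLeadMonomial_of_mem_generators
      exists_mem_generators_isLeadMonomial]
  · rintro _ (rfl | rfl | rfl | rfl) <;> exact sum_single_add_single _ _
end

section
/- Let k be a field, R' = k[x,y]/(x² − y², xy), and let M be the cokernel of the 2×2 matrix A = [[x, 0], [−y, x]] over R'. Then with B = [[y, 0], [x, y]], the complex ⋯ → R'(−3)² →A R'(−2)² →B R'(−1)² →A R'² → M → 0 is exact; i.e., M has an eventually 2-periodic minimal free resolution over R' with alternating differentials A and B. In particular, M has a linear resolution over R'. -/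
/-!
`R'` has `k`-basis `1, x, y, x²` (note `x³ = y³ = 0`), and the functional "coefficient of `x²`
plus coefficient of `y²`" on `k[x,y]` kills both relations, so it detects the socle element
`x² = y²`. Hence `x u = 0` in `R'` forces `u ∈ (y)`, and `y u = 0` forces `u ∈ (x)`.
Both `A` and `B` have the shape `[[p, 0], [q, p]]`, and `AB = BA = 0` because `xy = 0` and
`x² = y²`; for such matrices, solving for one coordinate after the other reduces exactness to
`ann r ⊆ (p)` for the diagonal entries, i.e. to `ann y = (x)` and `ann x = (y)`.
-/

open MvPolynomial

noncomputable section

variable (k : Type) [Field k]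

/-- `R' = k[x,y]/(x² − y², xy)` with `x = X 0`, `y = X 1`. -/
def Rprime := MvPolynomial (Fin 2) k ⧸
  (Ideal.span {(X 0 : MvPolynomial (Fin 2) k) ^ 2 - X 1 ^ 2, X 0 * X 1})

instance : CommRing (Rprime k) := by unfold Rprime; infer_instance

/-- The image of `x` in `R'`. -/
def xR : Rprime k := Ideal.Quotient.mk _ (X 0)
/-- The image of `y` in `R'`. -/
def yR : Rprime k := Ideal.Quotient.mk _ (X 1)

/-- The matrix `A = [[x, 0], [−y, x]]` over `R'`. -/
def matA : Matrix (Fin 2) (Fin 2) (Rprime k) := !![xR k, 0; -yR k, xR k]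

/-- The matrix `B = [[y, 0], [x, y]]` over `R'`. -/
def matB : Matrix (Fin 2) (Fin 2) (Rprime k) := !![yR k, 0; xR k, yR k]

theorem MvPolynomial.coeff_zero_aeval_of_forall_coeff_zero {σ R : Type*} [CommSemiring R]
    {v : σ → Polynomial R} (hv : ∀ i, (v i).coeff 0 = 0) (f : MvPolynomial σ R) :
    (aeval v f).coeff 0 = constantCoeff f := by
  simp_rw [Polynomial.coeff_zero_eq_aeval_zero, comp_aeval_apply,
    ← Polynomial.coeff_zero_eq_aeval_zero, hv]
  exact aeval_zero' f

theorem Matrix.exact_mulVecLin_lowerTriangular {R : Type*} [CommRing R] {p q r s : R}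
    (hrp : r * p = 0) (hspq : s * p + r * q = 0) (hann : ∀ u, r * u = 0 → p ∣ u) :
    Function.Exact (!![p, 0; q, p]).mulVecLin (!![r, 0; s, r]).mulVecLin := by
  intro v
  simp only [mulVecLin_apply, funext_iff, Fin.forall_fin_two, Set.mem_range, mulVec, dotProduct,
    Fin.sum_univ_two, of_apply, cons_val', cons_val_fin_one, cons_val_zero, cons_val_one,
    zero_mul, add_zero, Pi.zero_apply]
  constructor
  · rintro ⟨h0, h1⟩
    obtain ⟨a, ha⟩ := hann _ h0
    obtain ⟨b, hb⟩ := hann (v 1 - q * a) (by linear_combination h1 - s * ha - a * hspq)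
    exact ⟨![a, b], by simp [ha], by
      simp only [cons_val_zero, cons_val_one, cons_val_fin_one]
      linear_combination -hb⟩
  · rintro ⟨w, hw0, hw1⟩
    exact ⟨by linear_combination -r * hw0 + w 0 * hrp,
      by linear_combination -s * hw0 - r * hw1 + w 0 * hspq + w 1 * hrp⟩

namespace Rprime

variable {k}

def ideal : Ideal (MvPolynomial (Fin 2) k) :=
  Ideal.span {(X 0 : MvPolynomial (Fin 2) k) ^ 2 - X 1 ^ 2, X 0 * X 1}

def mk : MvPolynomial (Fin 2) k →+* Rprime k := Ideal.Quotient.mk ideal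

lemma mk_X_zero : mk (X 0 : MvPolynomial (Fin 2) k) = xR k := rfl
lemma mk_X_one : mk (X 1 : MvPolynomial (Fin 2) k) = yR k := rfl

lemma mk_surjective : Function.Surjective (mk : MvPolynomial (Fin 2) k → Rprime k) :=
  Ideal.Quotient.mk_surjective

lemma mk_eq_zero_iff {f : MvPolynomial (Fin 2) k} : mk f = 0 ↔ f ∈ ideal :=
  Ideal.Quotient.eq_zero_iff_mem

variable (k) in
lemma x_mul_y : xR k * yR k = 0 := by
  rw [← mk_X_zero, ← mk_X_one, ← map_mul, mk_eq_zero_iff]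
  exact Ideal.subset_span (Or.inr rfl)

variable (k) in
lemma x_sq : xR k ^ 2 = yR k ^ 2 := by
  rw [← sub_eq_zero, ← mk_X_zero, ← mk_X_one, ← map_pow, ← map_pow, ← map_sub,
    mk_eq_zero_iff]
  exact Ideal.subset_span (Or.inl rfl)

/-- The coefficient of `x²` plus that of `y²`, read off from `f(t, 0)` and `f(0, t)`. -/
def socleCoeff (f : MvPolynomial (Fin 2) k) : k :=
  (aeval ![Polynomial.X, 0] f).coeff 2 + (aeval ![0, Polynomial.X] f).coeff 2

lemma socleCoeff_eq_zero_of_mem {f : MvPolynomial (Fin 2) k} (hf : f ∈ ideal) :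
    socleCoeff f = 0 := by
  obtain ⟨a, b, rfl⟩ := Ideal.mem_span_pair.mp hf
  simp [socleCoeff, Polynomial.coeff_mul_X_pow', coeff_zero_aeval_of_forall_coeff_zero,
    Fin.forall_fin_two]

lemma eq_zero_of_C_mul_X_add_C_mul_X_sq_eq_zero {a b : k} (i : Fin 2)
    (h : mk (C a) * mk (X i) + mk (C b) * mk (X i) ^ 2 = 0) : a = 0 ∧ b = 0 := by
  rw [← map_pow, ← map_mul, ← map_mul, ← map_add, mk_eq_zero_iff] at h
  have hb := socleCoeff_eq_zero_of_mem h
  have ha := socleCoeff_eq_zero_of_mem (Ideal.mul_mem_left _ (X i) h)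
  fin_cases i <;>
    exact ⟨by simpa [socleCoeff] using ha, by simpa [socleCoeff] using hb⟩

lemma exists_eq_normalForm (u : Rprime k) : ∃ a b c d : k,
    u = mk (C a) + mk (C b) * xR k + mk (C c) * yR k + mk (C d) * xR k ^ 2 := by
  obtain ⟨f, rfl⟩ := mk_surjective u
  induction f using MvPolynomial.induction_on with
  | C a => exact ⟨a, 0, 0, 0, by simp⟩
  | add f g hf hg =>
    obtain ⟨a, b, c, d, hf⟩ := hf
    obtain ⟨a', b', c', d', hg⟩ := hg
    exact ⟨a + a', b + b', c + c', d + d', by simp only [map_add, hf, hg]; ring⟩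
  | mul_X f i hf =>
    obtain ⟨a, b, c, d, hf⟩ := hf
    rw [map_mul, hf]
    fin_cases i <;> simp only [Fin.zero_eta, Fin.mk_one]
    · refine ⟨0, a, 0, b, ?_⟩
      simp only [map_zero, mk_X_zero]
      linear_combination (mk (C c) + mk (C d) * yR k) * x_mul_y k + mk (C d) * xR k * x_sq k
    · refine ⟨0, 0, a, c, ?_⟩
      simp only [map_zero, mk_X_one]
      linear_combination (mk (C b) + mk (C d) * xR k) * x_mul_y k - mk (C c) * x_sq k

lemma dvd_of_x_mul_eq_zero {u : Rprime k} (h : xR k * u = 0) : yR k ∣ u := by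
  obtain ⟨a, b, c, d, rfl⟩ := exists_eq_normalForm u
  obtain ⟨rfl, rfl⟩ : a = 0 ∧ b = 0 := eq_zero_of_C_mul_X_add_C_mul_X_sq_eq_zero 0 <| by
    rw [mk_X_zero]
    linear_combination h - (mk (C c) + mk (C d) * yR k) * x_mul_y k - mk (C d) * xR k * x_sq k
  refine ⟨mk (C c) + mk (C d) * yR k, ?_⟩
  simp only [map_zero]
  linear_combination mk (C d) * x_sq k

lemma dvd_of_y_mul_eq_zero {u : Rprime k} (h : yR k * u = 0) : xR k ∣ u := by
  obtain ⟨a, b, c, d, rfl⟩ := exists_eq_normalForm u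
  obtain ⟨rfl, rfl⟩ : a = 0 ∧ c = 0 := eq_zero_of_C_mul_X_add_C_mul_X_sq_eq_zero 1 <| by
    rw [mk_X_one]
    linear_combination h - (mk (C b) + mk (C d) * xR k) * x_mul_y k
  refine ⟨mk (C b) + mk (C d) * xR k, ?_⟩
  simp only [map_zero]
  ring

end Rprime

/-- Over `R' = k[x,y]/(x²−y², xy)`, the module `M = coker A` has an eventually 2-periodic
minimal (linear) free resolution `⋯ → R'² →A R'² →B R'² →A R'² → M → 0` with alternating
differentials `A` and `B`: the displayed complex is exact. -/
theorem periodic_resolution_exact :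
    Function.Exact (matA k).mulVecLin (matB k).mulVecLin ∧
    Function.Exact (matB k).mulVecLin (matA k).mulVecLin ∧
    Function.Exact (matA k).mulVecLin (LinearMap.range (matA k).mulVecLin).mkQ ∧
    Function.Surjective (LinearMap.range (matA k).mulVecLin).mkQ :=
  ⟨Matrix.exact_mulVecLin_lowerTriangular (by rw [mul_comm, Rprime.x_mul_y])
      (by linear_combination Rprime.x_sq k) fun _ => Rprime.dvd_of_y_mul_eq_zero,
    Matrix.exact_mulVecLin_lowerTriangular (Rprime.x_mul_y k)
      (by linear_combination Rprime.x_sq k) fun _ => Rprime.dvd_of_x_mul_eq_zero,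
    LinearMap.exact_map_mkQ_range _, Submodule.mkQ_surjective _⟩

end
end
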